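/- arXiv:2006.02079 — 6 statements merged into one kernel-verified Lean document; each statement's English description precedes it below -/
import Mathlib

section
/- Let ℓ ≥ 7 be an integer and let G be a graph such that every subgraph J of G with at least one vertex satisfies (ℓ−2)·e(J) < (ℓ−1)·v(J) (i.e. m(G) < m₂(C_ℓ) = (ℓ−1)/(ℓ−2)). Then there exists a proper edge colouring of G in which no copy of C_ℓ is rainbow (i.e. G ⟶̸rb C_ℓ). -/
/-- A proper edge colouring of `G`: edges sharing a vertex receive distinct colours. -/
def IsProperEdgeColoring {V : Type*} (G : SimpleGraph V) (c : Sym2 V → ℕ) : Prop :=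
  ∀ a b d : V, G.Adj a b → G.Adj a d → b ≠ d → c s(a, b) ≠ c s(a, d)

/-- There is a rainbow copy of `H` in `G` under the edge colouring `c`:
a subgraph of `G` isomorphic to `H` whose edges have pairwise distinct colours. -/
def HasRainbowCopy {V W : Type*} (G : SimpleGraph V) (H : SimpleGraph W)
    (c : Sym2 V → ℕ) : Prop :=
  ∃ f : H →g G, Function.Injective f ∧
    ∀ e₁ ∈ H.edgeSet, ∀ e₂ ∈ H.edgeSet, e₁ ≠ e₂ →
      c (Sym2.map f e₁) ≠ c (Sym2.map f e₂)

/-- `G ⟶rb H`: every proper edge colouring of `G` yields a rainbow copy of `H`. -/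
def RainbowArrow {V W : Type*} (G : SimpleGraph V) (H : SimpleGraph W) : Prop :=
  ∀ c : Sym2 V → ℕ, IsProperEdgeColoring G c → HasRainbowCopy G H c

/-!
Induction on `G`, removing edges. If a vertex `x` has exactly one neighbour, no copy of `C_ℓ`
passes through `x`, so the edge at `x` can take a new colour. If two adjacent vertices `a`, `b`
both have degree two, with further neighbours `u` of `a` and `w` of `b`, then a copy of `C_ℓ`
through `a` or `b` contains the path `u a b w` (as `C_ℓ` is triangle-free); so if `u = w` no copy
passes through `a`, and otherwise the two disjoint edges `ua`, `bw` can share one new colour.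
In the remaining case every non-isolated vertex has degree at least two and the vertices of
degree two are independent, so double counting gives `5 e ≥ 6 v` on the non-isolated vertices,
contradicting `m(G) < (ℓ - 1)/(ℓ - 2) ≤ 6/5`.
-/

open Finset Function

namespace SimpleGraph

variable {V W : Type*}

/-- `m(G) < a / b`, where `m(G)` is the maximum density of `G`. -/
def MaxDensityLT (G : SimpleGraph V) (a b : ℕ) : Prop :=
  ∀ J : G.Subgraph, J.verts.Nonempty → b * J.edgeSet.ncard < a * J.verts.ncard

def HasNoLeaf (H : SimpleGraph W) : Prop :=
  ∀ ⦃i j⦄, H.Adj i j → ∃ k, H.Adj j k ∧ k ≠ i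

section Density

variable {G : SimpleGraph V} {a b c d : ℕ}

lemma MaxDensityLT.anti {G' : SimpleGraph V} (hG : MaxDensityLT G a b) (h : G' ≤ G) :
    MaxDensityLT G' a b := fun J =>
  hG ⟨J.verts, J.Adj, fun hJ => h (J.adj_sub hJ), J.edge_vert, J.symm⟩

lemma MaxDensityLT.of_mul_le (hG : MaxDensityLT G a b) (hd : 0 < d) (h : a * d ≤ c * b) :
    MaxDensityLT G c d := by
  intro J hJ
  have := hG J hJ
  nlinarith

end Density

section Cycle

lemma cycleGraph_edgeSet_nonempty {n : ℕ} (hn : 2 ≤ n) : (cycleGraph n).edgeSet.Nonempty := by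
  obtain ⟨n, rfl⟩ : ∃ k, n = k + 2 := ⟨n - 2, by omega⟩
  exact ⟨s(0, 1), by simp [cycleGraph_adj]⟩

lemma cycleGraph_hasNoLeaf {n : ℕ} (hn : 3 ≤ n) : HasNoLeaf (cycleGraph n) := by
  obtain ⟨n, rfl⟩ : ∃ k, n = k + 3 := ⟨n - 3, by omega⟩
  intro i j _
  have : 1 < #((cycleGraph (n + 3)).neighborFinset j) := by
    rw [card_neighborFinset_eq_degree, cycleGraph_degree_three_le]; omega
  obtain ⟨k, hk, hki⟩ := (one_lt_card_iff_nontrivial.1 this).exists_ne i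
  exact ⟨k, (mem_neighborFinset _ _ _).1 hk, hki⟩

lemma cycleGraph_cliqueFree_three {n : ℕ} (hn : 4 ≤ n) : (cycleGraph n).CliqueFree 3 := by
  obtain ⟨n, rfl⟩ : ∃ k, n = k + 2 := ⟨n - 2, by omega⟩
  have h3 : (3 : Fin (n + 2)) ≠ 0 := by
    intro h
    have := Nat.le_of_dvd (by norm_num) ((Fin.natCast_eq_zero (a := 3)).1 (by exact_mod_cast h))
    omega
  intro s hs
  obtain ⟨x, y, z, hxy, hxz, hyz, rfl⟩ := is3Clique_iff.1 hs
  rw [cycleGraph_adj] at hxy hxz hyz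
  -- `x - z = (x - y) + (y - z)` with all three differences `±1` forces `3 = 0` or `1 = 0`
  apply h3
  rcases hxy with h1 | h1 <;> rcases hxz with h2 | h2 <;> rcases hyz with h3 | h3 <;> grind

end Cycle

section Copies

variable {G : SimpleGraph V} {H : SimpleGraph W} {f : H →g G}

lemma exists_adj_apply_eq_of_mem_map (f : H →g G) {e : Sym2 W} (he : e ∈ H.edgeSet) {x : V}
    (hx : x ∈ Sym2.map f e) : ∃ i j, H.Adj i j ∧ f i = x := by
  induction e using Sym2.ind with
  | _ i j =>
    rw [Sym2.map_mk, Sym2.mem_iff] at hx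
    rcases hx with rfl | rfl
    exacts [⟨i, j, he, rfl⟩, ⟨j, i, (H.mem_edgeSet.1 he).symm, rfl⟩]

lemma apply_ne_of_neighborSet_eq_singleton (hH : HasNoLeaf H) (hf : Injective f) {i j : W}
    (hij : H.Adj i j) {x y : V} (hx : G.neighborSet x = {y}) : f i ≠ x := by
  rintro rfl
  obtain ⟨k, hik, hkj⟩ := hH hij.symm
  have hj : f j ∈ G.neighborSet (f i) := f.map_adj hij
  have hk : f k ∈ G.neighborSet (f i) := f.map_adj hik
  rw [hx] at hj hk
  exact hkj (hf (hk.trans hj.symm))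

lemma exists_map_eq_of_neighborSet_eq_pair (hH : HasNoLeaf H) (h3 : H.CliqueFree 3)
    (hf : Injective f) {i j : W} (hij : H.Adj i j) {a b u w : V} (hfi : f i = a)
    (ha : G.neighborSet a = {b, u}) (hb : G.neighborSet b = {a, w}) :
    u ≠ w ∧ (∃ e ∈ H.edgeSet, Sym2.map f e = s(a, u)) ∧
      ∃ e ∈ H.edgeSet, Sym2.map f e = s(b, w) := by
  classical
  obtain ⟨k, hik, hkj⟩ := hH hij.symm
  have hj : f j ∈ G.neighborSet a := hfi ▸ f.map_adj hij
  have hk : f k ∈ G.neighborSet a := hfi ▸ f.map_adj hik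
  rw [ha] at hj hk
  obtain ⟨p, q, hip, hiq, hp, hq⟩ : ∃ p q, H.Adj i p ∧ H.Adj i q ∧ f p = b ∧ f q = u := by
    rcases hj with hj | hj <;> rcases hk with hk | hk
    · exact absurd (hf (hk.trans hj.symm)) hkj
    · exact ⟨j, k, hij, hik, hj, hk⟩
    · exact ⟨k, j, hik, hij, hk, hj⟩
    · exact absurd (hf (hk.trans hj.symm)) hkj
  obtain ⟨r, hpr, hri⟩ := hH hip
  have hr : f r ∈ G.neighborSet b := hp ▸ f.map_adj hpr
  rw [hb] at hr
  have hr : f r = w := hr.resolve_left fun h => hri (hf (h.trans hfi.symm))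
  have hqr : q ≠ r := by
    rintro rfl
    exact h3 {q, i, p} (is3Clique_triple_iff.2 ⟨hiq.symm, hpr.symm, hip⟩)
  refine ⟨fun h => hqr (hf (hq.trans (h.trans hr.symm))), ⟨s(i, q), hiq, ?_⟩, s(p, r), hpr, ?_⟩
  · simp [hfi, hq]
  · simp [hp, hr]

end Copies

section Recolouring

variable {G : SimpleGraph V} {H : SimpleGraph W}

lemma not_rainbowArrow_bot (hH : H.edgeSet.Nonempty) : ¬RainbowArrow (⊥ : SimpleGraph V) H := by
  intro h
  obtain ⟨f, -⟩ := h 0 fun _ _ _ h => h.elim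
  obtain ⟨e, he⟩ := hH
  induction e using Sym2.ind with
  | _ i j => exact f.map_adj he

lemma deleteEdges_lt_of_adj {D : Set (Sym2 V)} {x y : V} (hxy : G.Adj x y) (hD : s(x, y) ∈ D) :
    G.deleteEdges D < G :=
  (G.deleteEdges_le D).lt_of_ne fun h =>
    (deleteEdges_adj.1 (by rw [h]; exact hxy)).2 hD

/-- The matching `D` receives one new colour, the edges of `G - D` keep theirs. -/
lemma not_rainbowArrow_of_deleteEdges {D : Set (Sym2 V)}
    (hD : ∀ p q r, s(p, q) ∈ D → s(p, r) ∈ D → q = r)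
    (hcopy : ∀ f : H →g G, Injective f → (∃ e ∈ H.edgeSet, Sym2.map f e ∈ D) →
      ∃ e₁ ∈ H.edgeSet, ∃ e₂ ∈ H.edgeSet, e₁ ≠ e₂ ∧ Sym2.map f e₁ ∈ D ∧ Sym2.map f e₂ ∈ D)
    (h : ¬RainbowArrow (G.deleteEdges D) H) : ¬RainbowArrow G H := by
  classical
  simp only [RainbowArrow, not_forall, exists_prop] at h ⊢
  obtain ⟨c, hc, hrc⟩ := h
  refine ⟨fun e => if e ∈ D then 0 else c e + 1, ?_, ?_⟩
  · intro p q r hpq hpr hqr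
    by_cases hq : s(p, q) ∈ D <;> by_cases hr : s(p, r) ∈ D <;>
      simp only [hq, hr, if_true, if_false]
    · exact absurd (hD p q r hq hr) hqr
    · omega
    · omega
    · simpa using hc p q r (deleteEdges_adj.2 ⟨hpq, hq⟩) (deleteEdges_adj.2 ⟨hpr, hr⟩) hqr
  · rintro ⟨f, hf, hrb⟩
    by_cases hmeet : ∃ e ∈ H.edgeSet, Sym2.map f e ∈ D
    · obtain ⟨e₁, he₁, e₂, he₂, hne, h₁, h₂⟩ := hcopy f hf hmeet
      exact hrb e₁ he₁ e₂ he₂ hne (by simp [h₁, h₂])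
    · push Not at hmeet
      refine hrc ⟨⟨f, fun {i j} hij => deleteEdges_adj.2 ⟨f.map_adj hij, hmeet s(i, j) hij⟩⟩, hf,
        fun e₁ he₁ e₂ he₂ hne h => hrb e₁ he₁ e₂ he₂ hne ?_⟩
      simpa [hmeet e₁ he₁, hmeet e₂ he₂] using h

lemma not_rainbowArrow_of_deleteEdges_singleton {x y : V}
    (hx : ∀ f : H →g G, Injective f → ∀ i j, H.Adj i j → f i ≠ x)
    (h : ¬RainbowArrow (G.deleteEdges {s(x, y)}) H) : ¬RainbowArrow G H := by
  refine not_rainbowArrow_of_deleteEdges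
    (fun p q r hq hr => Sym2.congr_right.1 (hq.trans hr.symm)) ?_ h
  rintro f hf ⟨e, he, hfe⟩
  obtain ⟨i, j, hij, hi⟩ := exists_adj_apply_eq_of_mem_map f he (x := x) (by simp_all)
  exact absurd hi (hx f hf i j hij)

lemma not_rainbowArrow_of_neighborSet_eq_pair (hH : HasNoLeaf H) (h3 : H.CliqueFree 3)
    {a b u w : V}
    (ha : G.neighborSet a = {b, u}) (hb : G.neighborSet b = {a, w}) (hbu : b ≠ u) (haw : a ≠ w)
    (huw : u ≠ w) (h : ¬RainbowArrow (G.deleteEdges {s(a, u), s(b, w)}) H) :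
    ¬RainbowArrow G H := by
  have hab : a ≠ b := G.ne_of_adj (by rw [← mem_neighborSet, ha]; exact Set.mem_insert b _)
  have hdisj : ∀ p, p ∈ s(a, u) → p ∉ s(b, w) := by
    simp only [Sym2.mem_iff]; grind
  refine not_rainbowArrow_of_deleteEdges ?_ ?_ h
  · intro p q r hq hr
    rcases hq with hq | hq <;> rcases hr with hr | hr
    · exact Sym2.congr_right.1 (hq.trans hr.symm)
    · exact absurd (hr ▸ Sym2.mem_mk_left p r) (hdisj p (hq ▸ Sym2.mem_mk_left p q))
    · exact absurd (hq ▸ Sym2.mem_mk_left p q) (hdisj p (hr ▸ Sym2.mem_mk_left p r))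
    · exact Sym2.congr_right.1 (hq.trans hr.symm)
  · rintro f hf ⟨e, he, hfe⟩
    have hne : s(a, u) ≠ s(b, w) := fun h =>
      hdisj a (Sym2.mem_mk_left a u) (h ▸ Sym2.mem_mk_left a u)
    have hmem : a ∈ Sym2.map f e ∨ b ∈ Sym2.map f e := by
      rcases hfe with hfe | hfe <;> simp_all
    rcases hmem with hae | hbe
    · obtain ⟨i, j, hij, hi⟩ := exists_adj_apply_eq_of_mem_map f he hae
      obtain ⟨-, ⟨e₁, he₁, h₁⟩, e₂, he₂, h₂⟩ :=
        exists_map_eq_of_neighborSet_eq_pair hH h3 hf hij hi ha hb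
      exact ⟨e₁, he₁, e₂, he₂, fun h => hne (h₁ ▸ h ▸ h₂), by simp [h₁], by simp [h₂]⟩
    · obtain ⟨i, j, hij, hi⟩ := exists_adj_apply_eq_of_mem_map f he hbe
      obtain ⟨-, ⟨e₂, he₂, h₂⟩, e₁, he₁, h₁⟩ :=
        exists_map_eq_of_neighborSet_eq_pair hH h3 hf hij hi hb ha
      exact ⟨e₁, he₁, e₂, he₂, fun h => hne (h₁ ▸ h ▸ h₂), by simp [h₁], by simp [h₂]⟩

end Recolouring

section Counting

variable {G : SimpleGraph V}

lemma IsIndepSet.sum_degree_le [Fintype V] [DecidableEq V] [DecidableRel G.Adj] {A : Finset V}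
    (hA : G.IsIndepSet A) : ∑ v ∈ A, G.degree v ≤ #G.edgeFinset := by
  have hdisj : (A : Set V).PairwiseDisjoint fun v => G.incidenceFinset v := by
    intro v hv w hw hvw
    rw [Function.onFun, ← disjoint_coe, coe_incidenceFinset, coe_incidenceFinset,
      Set.disjoint_iff_inter_eq_empty]
    exact G.incidenceSet_inter_incidenceSet_of_not_adj (hA hv hw hvw) hvw
  calc ∑ v ∈ A, G.degree v = ∑ v ∈ A, #(G.incidenceFinset v) := by
        simp only [card_incidenceFinset_eq_degree]
    _ = #(A.biUnion fun v => G.incidenceFinset v) := (card_biUnion hdisj).symm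
    _ ≤ #G.edgeFinset := card_le_card (biUnion_subset.2 fun v _ => G.incidenceFinset_subset v)

lemma six_mul_card_support_le [Fintype V] [DecidableEq V] [DecidableRel G.Adj]
    (h1 : ∀ v, G.degree v ≠ 1) (h2 : ∀ a b, G.Adj a b → G.degree a = 2 → G.degree b ≠ 2) :
    6 * #G.support.toFinset ≤ 5 * #G.edgeFinset := by
  set A := G.support.toFinset.filter (G.degree · = 2)
  set B := G.support.toFinset.filter (G.degree · ≠ 2)
  have hAB : #A + #B = #G.support.toFinset := card_filter_add_card_filter_not _
  have hsum : ∑ v ∈ A, G.degree v + ∑ v ∈ B, G.degree v = 2 * #G.edgeFinset := by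
    rw [sum_filter_add_sum_filter_not, sum_degrees_support_eq_twice_card_edges]
  have hA : ∑ v ∈ A, G.degree v = 2 * #A := by
    rw [sum_congr rfl fun v hv => (mem_filter.1 hv).2, sum_const, smul_eq_mul, mul_comm]
  have hB : 3 * #B ≤ ∑ v ∈ B, G.degree v := by
    rw [mul_comm, ← smul_eq_mul, ← sum_const]
    refine sum_le_sum fun v hv => ?_
    obtain ⟨hv, hv2⟩ := mem_filter.1 hv
    have hv0 : G.degree v ≠ 0 := by
      rwa [Ne, degree_eq_zero_iff_notMem_support, not_not, ← Set.mem_toFinset]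
    have := h1 v
    omega
  have hind : ∑ v ∈ A, G.degree v ≤ #G.edgeFinset :=
    IsIndepSet.sum_degree_le fun v hv w hw _ hvw =>
      h2 v w hvw (mem_filter.1 hv).2 (mem_filter.1 hw).2
  omega

lemma exists_neighborSet_eq_pair_of_degree_eq_two [DecidableEq V] {a b : V}
    [Fintype (G.neighborSet a)] (hab : G.Adj a b) (h : G.degree a = 2) :
    ∃ u, b ≠ u ∧ G.neighborSet a = {b, u} := by
  obtain ⟨x, y, hxy, hs⟩ := card_eq_two.1 h
  have hb : b ∈ G.neighborFinset a := (mem_neighborFinset _ _ _).2 hab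
  rw [hs, mem_insert, mem_singleton] at hb
  rw [← coe_neighborFinset, hs]
  rcases hb with rfl | rfl
  · exact ⟨y, hxy, by simp⟩
  · exact ⟨x, hxy.symm, by simp [Set.pair_comm]⟩

lemma not_maxDensityLT_six_five [Finite V] (hG : G ≠ ⊥) (h1 : ¬∃ x y, G.neighborSet x = {y})
    (h2 : ¬∃ a b u w, b ≠ u ∧ a ≠ w ∧ G.neighborSet a = {b, u} ∧ G.neighborSet b = {a, w}) :
    ¬MaxDensityLT G 6 5 := by
  classical
  cases nonempty_fintype V
  have hdeg1 : ∀ v, G.degree v ≠ 1 := by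
    intro v hv
    obtain ⟨y, hy⟩ := card_eq_one.1 hv
    exact h1 ⟨v, y, by rw [← coe_neighborFinset, hy, coe_singleton]⟩
  have hdeg2 : ∀ a b, G.Adj a b → G.degree a = 2 → G.degree b ≠ 2 := by
    intro a b hab ha hb
    obtain ⟨u, hbu, ha⟩ := exists_neighborSet_eq_pair_of_degree_eq_two hab ha
    obtain ⟨w, haw, hb⟩ := exists_neighborSet_eq_pair_of_degree_eq_two hab.symm hb
    exact h2 ⟨a, b, u, w, hbu, haw, ha, hb⟩
  intro hd
  obtain ⟨x, y, hxy⟩ := ne_bot_iff_exists_adj.1 hG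
  let J : G.Subgraph :=
    { verts := G.support, Adj := G.Adj, adj_sub := id, edge_vert := fun h => ⟨_, h⟩,
      symm := G.symm }
  have hJ := hd J ⟨x, y, hxy⟩
  have hv : J.verts.ncard = #G.support.toFinset := Set.ncard_eq_toFinset_card' _
  have he : J.edgeSet.ncard = #G.edgeFinset := Set.ncard_eq_toFinset_card' G.edgeSet
  have := six_mul_card_support_le hdeg1 hdeg2
  omega

end Counting

theorem not_rainbowArrow_of_maxDensityLT_six_five [Finite V] {H : SimpleGraph W}
    (hHe : H.edgeSet.Nonempty) (hH : HasNoLeaf H) (h3 : H.CliqueFree 3) (G : SimpleGraph V)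
    (hG : MaxDensityLT G 6 5) : ¬RainbowArrow G H := by
  induction G using WellFoundedLT.induction with
  | _ G ih =>
  have ih' : ∀ {x y} D, G.Adj x y → s(x, y) ∈ D → ¬RainbowArrow (G.deleteEdges D) H :=
    fun D hxy hD => ih _ (deleteEdges_lt_of_adj hxy hD) (hG.anti (G.deleteEdges_le D))
  rcases eq_or_ne G ⊥ with rfl | hbot
  · exact not_rainbowArrow_bot hHe
  by_cases hleaf : ∃ x y, G.neighborSet x = {y}
  · obtain ⟨x, y, hx⟩ := hleaf
    have hxy : G.Adj x y := by rw [← mem_neighborSet, hx]; rfl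
    exact not_rainbowArrow_of_deleteEdges_singleton
      (fun f hf i j hij => apply_ne_of_neighborSet_eq_singleton hH hf hij hx) (ih' _ hxy rfl)
  by_cases hpath : ∃ a b u w, b ≠ u ∧ a ≠ w ∧ G.neighborSet a = {b, u} ∧ G.neighborSet b = {a, w}
  · obtain ⟨a, b, u, w, hbu, haw, ha, hb⟩ := hpath
    rcases eq_or_ne u w with rfl | huw
    · have hab : G.Adj a b := by rw [← mem_neighborSet, ha]; exact Set.mem_insert b _
      exact not_rainbowArrow_of_deleteEdges_singleton (fun f hf i j hij hfi =>
        (exists_map_eq_of_neighborSet_eq_pair hH h3 hf hij hfi ha hb).1 rfl) (ih' _ hab rfl)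
    · have hau : G.Adj a u := by rw [← mem_neighborSet, ha]; simp
      exact not_rainbowArrow_of_neighborSet_eq_pair hH h3 ha hb hbu haw huw (ih' _ hau (by simp))
  · exact absurd hG (not_maxDensityLT_six_five hbot hleaf hpath)

end SimpleGraph

open SimpleGraph

/-- If every subgraph `J` of `G` with at least one vertex satisfies
`(ℓ-2)·e(J) < (ℓ-1)·v(J)` (i.e. `m(G) < (ℓ-1)/(ℓ-2)`), then there is a proper edge
colouring of `G` in which no copy of `C_ℓ` is rainbow, i.e. `G ⟶̸rb C_ℓ`. -/
theorem no_rainbow_cycle_of_sparse_seven {V : Type*} [Fintype V] (ℓ : ℕ) (hℓ : 7 ≤ ℓ)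
    (G : SimpleGraph V)
    (hG : ∀ J : G.Subgraph, J.verts.Nonempty →
      (ℓ - 2) * J.edgeSet.ncard < (ℓ - 1) * J.verts.ncard) :
    ∃ c : Sym2 V → ℕ, IsProperEdgeColoring G c ∧
      ¬ HasRainbowCopy G (SimpleGraph.cycleGraph ℓ) c := by
  have hG' : G.MaxDensityLT 6 5 :=
    MaxDensityLT.of_mul_le (a := ℓ - 1) (b := ℓ - 2) hG (by norm_num) (by omega)
  simpa [RainbowArrow] using not_rainbowArrow_of_maxDensityLT_six_five
    (cycleGraph_edgeSet_nonempty (by omega)) (cycleGraph_hasNoLeaf (by omega))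
    (cycleGraph_cliqueFree_three (by omega)) G hG'
end

section
/- Let ℓ ≥ 5 be an integer and let G be a graph such that every subgraph J of G with at least one vertex satisfies (ℓ−2)·e(J) < (ℓ−1)·v(J) (i.e. m(G) < (ℓ−1)/(ℓ−2)). Let (H₁,…,H_t) be a construction sequence of ℓ-cycles in G, and for 1 ≤ i ≤ t−1 set e_i = |E(H_{i+1}) \ E(H_i)| and v_i = |V(H_{i+1}) \ V(H_i)|. Then for every 1 ≤ i ≤ t−1 we have (ℓ−2)·e_i < (ℓ−1)·v_i + ℓ. -/
/-- `C` is an `ℓ`-cycle of `G`, given as a subgraph of `G`. -/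
def IsCycleSubgraph {V : Type*} (G : SimpleGraph V) (ℓ : ℕ) (C : G.Subgraph) : Prop :=
  Nonempty (C.coe ≃g SimpleGraph.cycleGraph ℓ)


open SimpleGraph

-- edge count of cycleGraph
lemma cycleGraph_edge_card (n : ℕ) : ((cycleGraph (n+3)).edgeFinset.card) = n + 3 := by
  have h := SimpleGraph.sum_degrees_eq_twice_card_edges (cycleGraph (n+3))
  have h2 : ∀ v : Fin (n+3), (cycleGraph (n+3)).degree v = 2 := fun v =>
    cycleGraph_degree_three_le
  have h3 : ∑ v : Fin (n+3), (cycleGraph (n+3)).degree v = (n+3) * 2 := by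
    simp [h2, Finset.sum_const, mul_comm]
  rw [h] at h3
  omega

lemma cycle_verts_card {V : Type*} [Fintype V] {G : SimpleGraph V} {ℓ : ℕ}
    {C : G.Subgraph} (h : IsCycleSubgraph G ℓ C) : C.verts.ncard = ℓ := by
  obtain ⟨φ⟩ := h
  have := Nat.card_eq_of_equiv_fin (φ.toEquiv)
  rwa [Nat.card_coe_set_eq] at this

lemma cycle_edges_card {V : Type*} [Fintype V] {G : SimpleGraph V} {ℓ : ℕ} (hℓ : 3 ≤ ℓ)
    {C : G.Subgraph} (h : IsCycleSubgraph G ℓ C) : C.edgeSet.ncard = ℓ := by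
  classical
  obtain ⟨n, rfl⟩ : ∃ n, ℓ = n + 3 := ⟨ℓ - 3, by omega⟩
  obtain ⟨φ⟩ := h
  have himg : Sym2.map (↑) '' C.coe.edgeSet = C.edgeSet :=
    Subgraph.image_coe_edgeSet_coe C
  have hinj : Function.Injective (Sym2.map ((↑) : C.verts → V)) :=
    Sym2.map.injective Subtype.val_injective
  rw [← himg, Set.ncard_image_of_injective _ hinj]
  rw [← Nat.card_coe_set_eq, Nat.card_congr φ.mapEdgeSet,
    Nat.card_eq_fintype_card, ← SimpleGraph.edgeFinset_card, cycleGraph_edge_card]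

lemma key_count {V : Type*} [Fintype V] {G : SimpleGraph V} {ℓ : ℕ} (hℓ : 3 ≤ ℓ)
    {C D : G.Subgraph} (h : IsCycleSubgraph G ℓ C) (hnle : ¬ C ≤ D)
    (hne : (C.edgeSet ∩ D.edgeSet).Nonempty) :
    (C.verts \ D.verts).ncard + 1 ≤ (C.edgeSet \ D.edgeSet).ncard := by
  classical
  obtain ⟨n, rfl⟩ : ∃ n, ℓ = n + 3 := ⟨ℓ - 3, by omega⟩
  obtain ⟨φ⟩ := h
  haveI : Fintype ↥C.verts := Fintype.ofFinite _
  -- the graph of "new" edges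
  set K : SimpleGraph ↥C.verts :=
    C.coe.deleteEdges (Sym2.map (↑) ⁻¹' D.edgeSet) with hK
  haveI : DecidableRel K.Adj := Classical.decRel _
  have hKadj : ∀ u v : ↥C.verts, K.Adj u v ↔ C.coe.Adj u v ∧ s((u:V), (v:V)) ∉ D.edgeSet := by
    intro u v
    rw [hK, SimpleGraph.deleteEdges_adj]
    simp [Sym2.map_pair_eq]
  -- connectivity of C.coe
  have hconn : C.coe.Connected := φ.connected_iff.mpr (cycleGraph_connected)
  -- degree of C.coe is 2
  have hdeg2 : ∀ v : ↥C.verts, C.coe.degree v = 2 := by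
    intro v
    have : Fintype.card (C.coe.neighborSet v)
        = Fintype.card ((cycleGraph (n+3)).neighborSet (φ v)) :=
      Fintype.card_congr (φ.mapNeighborSet v)
    rw [SimpleGraph.card_neighborSet_eq_degree, SimpleGraph.card_neighborSet_eq_degree] at this
    rw [this, cycleGraph_degree_three_le]
  -- new vertices have all their edges new
  have hnewdeg : ∀ v : ↥C.verts, (v:V) ∉ D.verts → K.degree v = 2 := by
    intro v hv
    rw [← hdeg2 v]
    have hfs : K.neighborFinset v = C.coe.neighborFinset v := by
      ext w
      rw [SimpleGraph.mem_neighborFinset, SimpleGraph.mem_neighborFinset, hKadj]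
      refine ⟨fun h => h.1, fun h => ⟨h, fun hD => hv ?_⟩⟩
      exact D.edge_vert (Subgraph.mem_edgeSet.mp hD)
    unfold SimpleGraph.degree
    rw [hfs]
  -- an old vertex incident to a new edge
  have hv0 : ∃ v0 : ↥C.verts, (v0:V) ∈ D.verts ∧ 0 < K.degree v0 := by
    by_contra h0
    push_neg at h0
    have hclosed : ∀ v w : ↥C.verts, (v:V) ∈ D.verts → C.coe.Adj v w →
        s((v:V), (w:V)) ∈ D.edgeSet := by
      intro v w hv hadj
      by_contra hnot
      have : K.Adj v w := (hKadj v w).mpr ⟨hadj, hnot⟩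
      have : 0 < K.degree v := by
        rw [← SimpleGraph.card_neighborFinset_eq_degree]
        exact Finset.card_pos.mpr ⟨w, (SimpleGraph.mem_neighborFinset K v w).mpr this⟩
      exact absurd (h0 v hv) (by omega)
    have hwalk : ∀ (x y : ↥C.verts), C.coe.Walk x y → (x:V) ∈ D.verts → (y:V) ∈ D.verts := by
      intro x y p
      induction p with
      | nil => exact id
      | cons hadj p ih =>
        rename_i a b c
        intro hx
        have hDab : D.Adj (a:V) (b:V) := Subgraph.mem_edgeSet.mp (hclosed a b hx hadj)
        exact ih (D.edge_vert hDab.symm)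
    obtain ⟨e, heC, heD⟩ := hne
    induction e with
    | h a b =>
      have haC : a ∈ C.verts := C.edge_vert (Subgraph.mem_edgeSet.mp heC)
      have haD : a ∈ D.verts := D.edge_vert (Subgraph.mem_edgeSet.mp heD)
      have hall : ∀ v : ↥C.verts, (v:V) ∈ D.verts := fun v =>
        hwalk ⟨a, haC⟩ v (hconn ⟨a, haC⟩ v).some haD
      apply hnle
      constructor
      · intro x hx
        exact hall ⟨x, hx⟩
      · intro x y hxy
        have hx : x ∈ C.verts := C.edge_vert hxy
        have hy : y ∈ C.verts := C.edge_vert hxy.symm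
        have hcc : C.coe.Adj ⟨x, hx⟩ ⟨y, hy⟩ := by rwa [Subgraph.coe_adj]
        exact Subgraph.mem_edgeSet.mp (hclosed ⟨x, hx⟩ ⟨y, hy⟩ (hall ⟨x, hx⟩) hcc)
  obtain ⟨v0, hv0D, hv0deg⟩ := hv0
  set T : Finset ↥C.verts := Finset.univ.filter (fun v => (v:V) ∉ D.verts) with hT
  have hinj : Function.Injective (Sym2.map ((↑) : C.verts → V)) :=
    Sym2.map.injective Subtype.val_injective
  -- edge count transfer
  have himgE : Sym2.map (↑) '' K.edgeSet = C.edgeSet \ D.edgeSet := by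
    ext e
    constructor
    · rintro ⟨f, hf, rfl⟩
      induction f with
      | h u v =>
        rw [SimpleGraph.mem_edgeSet, hKadj] at hf
        rw [Sym2.map_pair_eq]
        exact ⟨Subgraph.mem_edgeSet.mpr ((Subgraph.coe_adj C u v).mp hf.1), hf.2⟩
    · rintro ⟨heC, heD⟩
      rw [← Subgraph.image_coe_edgeSet_coe C] at heC
      obtain ⟨f, hf, rfl⟩ := heC
      refine ⟨f, ?_, rfl⟩
      induction f with
      | h u v =>
        rw [SimpleGraph.mem_edgeSet] at hf ⊢
        rw [hKadj]
        rw [Sym2.map_pair_eq] at heD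
        exact ⟨hf, heD⟩
  have hEcard : (C.edgeSet \ D.edgeSet).ncard = K.edgeFinset.card := by
    rw [← himgE, Set.ncard_image_of_injective _ hinj, ← Nat.card_coe_set_eq,
      Nat.card_eq_fintype_card, ← SimpleGraph.edgeFinset_card]
  -- vertex count transfer
  have himgV : C.verts \ D.verts = (↑) '' {v : ↥C.verts | (v:V) ∉ D.verts} := by
    ext x
    constructor
    · rintro ⟨hxC, hxD⟩
      exact ⟨⟨x, hxC⟩, hxD, rfl⟩
    · rintro ⟨v, hv, rfl⟩
      exact ⟨v.2, hv⟩
  have hVcard : (C.verts \ D.verts).ncard = T.card := by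
    rw [himgV, Set.ncard_image_of_injective _ Subtype.val_injective,
      Set.ncard_eq_toFinset_card', Set.toFinset_setOf]
  -- degree sum
  have hsum : ∑ v, K.degree v = 2 * K.edgeFinset.card :=
    SimpleGraph.sum_degrees_eq_twice_card_edges K
  have v0nT : v0 ∉ T := by simp [hT, hv0D]
  have h1 : ∑ v ∈ insert v0 T, K.degree v ≤ ∑ v, K.degree v :=
    Finset.sum_le_sum_of_subset (Finset.subset_univ _)
  rw [Finset.sum_insert v0nT] at h1
  have h2 : ∑ v ∈ T, K.degree v = 2 * T.card := by
    rw [Finset.sum_congr rfl (fun v hv => hnewdeg v (by simpa [hT] using hv))]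
    simp [Finset.sum_const, mul_comm]
  rw [h2, hsum] at h1
  rw [hEcard, hVcard]
  omega

/-- `(H 1, …, H t)` is a construction sequence of `ℓ`-cycles in `G`: `H 1` is an
`ℓ`-cycle of `G` and each `H (i+1)` is obtained from `H i` by adding an `ℓ`-cycle `C`
of `G` with `C ⊄ H i` and `E(C) ∩ E(H i) ≠ ∅`. -/
def IsConstructionSeq {V : Type*} (G : SimpleGraph V) (ℓ t : ℕ)
    (H : ℕ → G.Subgraph) : Prop :=
  1 ≤ t ∧ IsCycleSubgraph G ℓ (H 1) ∧
    ∀ i, 1 ≤ i → i < t → ∃ C : G.Subgraph, IsCycleSubgraph G ℓ C ∧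
      ¬ C ≤ H i ∧ (C.edgeSet ∩ (H i).edgeSet).Nonempty ∧ H (i + 1) = H i ⊔ C

/-- In a construction sequence of `ℓ`-cycles in a graph `G` with `m(G) < (ℓ-1)/(ℓ-2)`,
setting `e i = |E(H (i+1)) \\ E(H i)|` and `v i = |V(H (i+1)) \\ V(H i)|`, we have
`(ℓ-2)·e i < (ℓ-1)·v i + ℓ` for every `1 ≤ i ≤ t-1`. -/
theorem construction_step_density {V : Type*} [Fintype V]
    (ℓ : ℕ) (hℓ : 5 ≤ ℓ) (G : SimpleGraph V)
    (hG : ∀ J : G.Subgraph, J.verts.Nonempty →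
      (ℓ - 2) * J.edgeSet.ncard < (ℓ - 1) * J.verts.ncard)
    (t : ℕ) (H : ℕ → G.Subgraph) (hH : IsConstructionSeq G ℓ t H) :
    ∀ i, 1 ≤ i → i < t →
      (ℓ - 2) * ((H (i + 1)).edgeSet \ (H i).edgeSet).ncard <
        (ℓ - 1) * ((H (i + 1)).verts \ (H i).verts).ncard + ℓ := by
  obtain ⟨ht, h1, hstep⟩ := hH
  have hℓ3 : 3 ≤ ℓ := by omega
  -- step data, repackaged
  have step : ∀ i, 1 ≤ i → i < t →
      ((H (i+1)).verts \ (H i).verts).ncard + 1 ≤ ((H (i+1)).edgeSet \ (H i).edgeSet).ncard ∧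
      ((H (i+1)).edgeSet \ (H i).edgeSet).ncard ≤ ℓ - 1 ∧
      (H (i+1)).verts.ncard = (H i).verts.ncard + ((H (i+1)).verts \ (H i).verts).ncard ∧
      (H (i+1)).edgeSet.ncard
        = (H i).edgeSet.ncard + ((H (i+1)).edgeSet \ (H i).edgeSet).ncard ∧
      (H (i+1)).verts.Nonempty := by
    intro i hi1 hit
    obtain ⟨C, hC, hnle, hne, hsup⟩ := hstep i hi1 hit
    have hEdiff : (H (i+1)).edgeSet \ (H i).edgeSet = C.edgeSet \ (H i).edgeSet := by
      rw [hsup, Subgraph.edgeSet_sup, Set.union_diff_left]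
    have hVdiff : (H (i+1)).verts \ (H i).verts = C.verts \ (H i).verts := by
      rw [hsup, Subgraph.verts_sup, Set.union_diff_left]
    have hEi : (C.edgeSet \ (H i).edgeSet).ncard < ℓ := by
      rw [← cycle_edges_card hℓ3 hC]
      refine Set.ncard_lt_ncard ?_ C.edgeSet.toFinite
      obtain ⟨e, heC, heD⟩ := hne
      exact ⟨Set.diff_subset, fun hsub => ((hsub heC).2 heD).elim⟩
    refine ⟨?_, ?_, ?_, ?_, ?_⟩
    · rw [hEdiff, hVdiff]
      exact key_count hℓ3 hC hnle hne
    · rw [hEdiff]; omega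
    · have hsub : (H i).verts ⊆ (H (i+1)).verts := by
        rw [hsup]; exact Subgraph.verts_mono le_sup_left
      have := Set.ncard_diff_add_ncard_of_subset hsub ((H (i+1)).verts.toFinite)
      omega
    · have hsub : (H i).edgeSet ⊆ (H (i+1)).edgeSet := by
        rw [hsup]; exact Subgraph.edgeSet_mono le_sup_left
      have := Set.ncard_diff_add_ncard_of_subset hsub ((H (i+1)).edgeSet.toFinite)
      omega
    · have : C.verts.Nonempty := by
        apply Set.nonempty_of_ncard_ne_zero
        rw [cycle_verts_card hC]
        omega
      obtain ⟨x, hx⟩ := this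
      exact ⟨x, by rw [hsup, Subgraph.verts_sup]; exact Or.inr hx⟩
  -- the invariant
  have inv : ∀ i, 1 ≤ i → i ≤ t →
      (ℓ - 1) * (H i).verts.ncard ≤ (ℓ - 2) * (H i).edgeSet.ncard + ℓ := by
    intro i
    induction i with
    | zero => omega
    | succ j ih =>
      intro _ hjt
      rcases Nat.eq_or_lt_of_le (Nat.one_le_iff_ne_zero.mpr (Nat.succ_ne_zero j)) with h1' | hj1
      · -- j + 1 = 1
        have hj0 : j = 0 := by omega
        subst hj0
        rw [cycle_verts_card h1, cycle_edges_card hℓ3 h1]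
        have hsplit : ℓ - 1 = (ℓ - 2) + 1 := by omega
        rw [hsplit, add_mul, one_mul]
      · -- j ≥ 1
        have hj : 1 ≤ j := by omega
        have hjlt : j < t := by omega
        obtain ⟨hkey, hle, hv, he, _⟩ := step j hj hjlt
        have ihj := ih hj (by omega)
        set vi := ((H (j+1)).verts \ (H j).verts).ncard
        set ei := ((H (j+1)).edgeSet \ (H j).edgeSet).ncard
        have hstep2 : (ℓ - 1) * vi ≤ (ℓ - 2) * ei := by
          have h1' : (ℓ - 1) * vi = (ℓ - 2) * vi + vi := by
            have : ℓ - 1 = (ℓ - 2) + 1 := by omega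
            rw [this, add_mul, one_mul]
          have h2' : (ℓ - 2) * (vi + 1) ≤ (ℓ - 2) * ei := Nat.mul_le_mul_left _ hkey
          have h3' : vi ≤ ℓ - 2 := by omega
          rw [h1']
          calc (ℓ - 2) * vi + vi ≤ (ℓ - 2) * vi + (ℓ - 2) := by omega
            _ = (ℓ - 2) * (vi + 1) := by ring
            _ ≤ (ℓ - 2) * ei := h2'
        rw [hv, he, Nat.mul_add, Nat.mul_add]
        omega
  -- conclusion
  intro i hi1 hit
  obtain ⟨hkey, hle, hv, he, hnonempty⟩ := step i hi1 hit
  have hdens := hG (H (i+1)) hnonempty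
  have ihi := inv i hi1 (by omega)
  rw [hv, he, Nat.mul_add, Nat.mul_add] at hdens
  omega
end

section
/- Let ℓ ≥ 3 be an integer, G a graph, and (H₁,…,H_t) a construction sequence of ℓ-cycles in G. Then for every 1 ≤ i ≤ t−1, setting e_i = |E(H_{i+1}) \ E(H_i)| and v_i = |V(H_{i+1}) \ V(H_i)|, we have e_i ≥ v_i + 1 and v_i ≤ ℓ − 2. -/
open SimpleGraph

open Fin.CommRing in
theorem Fin.exists_mem_sub_one_notMem {n : ℕ} {B : Set (Fin (n + 1))} (hne : B.Nonempty)
    (hB : B ≠ Set.univ) : ∃ x ∈ B, x - 1 ∉ B := by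
  by_contra! hclosed
  obtain ⟨b, hb⟩ := hne
  have hshift : ∀ m : ℕ, b - m ∈ B := by
    intro m
    induction m with
    | zero => simpa using hb
    | succ m ih => simpa [sub_sub] using hclosed _ ih
  refine hB (Set.eq_univ_of_forall fun x => ?_)
  simpa using hshift (b - x).val

theorem Fin.ncard_add_one_le_of_forall_mem {n : ℕ} {A B : Set (Fin (n + 1))}
    (hAB : ∀ j ∈ A, j ∈ B ∧ j - 1 ∈ B) (hne : B.Nonempty) (hB : B ≠ Set.univ) :
    A.ncard + 1 ≤ B.ncard := by
  obtain ⟨x, hxB, hx⟩ := Fin.exists_mem_sub_one_notMem hne hB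
  have hAB' : A ⊂ B :=
    ⟨fun j hj => (hAB j hj).1, fun h => hx (hAB x (h hxB)).2⟩
  exact Set.ncard_lt_ncard hAB'

theorem Fin.injective_sym2_mk_succ {V : Type*} {k : ℕ} {ψ : Fin (k + 3) → V}
    (hψ : Function.Injective ψ) : Function.Injective fun j => s(ψ j, ψ (j + 1)) := by
  intro a b h
  rcases Sym2.eq_iff.mp h with ⟨hab, -⟩ | ⟨hab, hba⟩
  · exact hψ hab
  · have h1 := hψ hab
    have h2 := hψ hba
    subst h1
    have htwo : (b + 1 + 1 : Fin (k + 3)) = b + 0 := by rw [add_zero]; exact h2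
    rw [add_assoc, add_left_cancel_iff, Fin.ext_iff, Fin.val_add, Fin.val_one, Fin.val_zero,
      Nat.mod_eq_of_lt (by omega)] at htwo
    omega

theorem Set.ncard_union_diff_left_eq_ncard_preimage_compl {α β : Type*} {f : α → β}
    (hf : Function.Injective f) (S : Set β) :
    ((S ∪ Set.range f) \ S).ncard = (f ⁻¹' Sᶜ).ncard := by
  rw [Set.union_sdiff_left, Set.sdiff_eq, ← Set.image_preimage_eq_range_inter,
    Set.ncard_image_of_injective _ hf]

theorem IsCycleSubgraph.exists_labelling {V : Type*} {G : SimpleGraph V} {n : ℕ}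
    {C : G.Subgraph} (hC : IsCycleSubgraph G (n + 2) C) :
    ∃ ψ : Fin (n + 2) → V, Function.Injective ψ ∧ C.verts = Set.range ψ ∧
      C.edgeSet = Set.range fun j => s(ψ j, ψ (j + 1)) := by
  obtain ⟨φ⟩ := hC
  refine ⟨fun j => φ.symm j, Subtype.val_injective.comp φ.symm.injective, ?_, ?_⟩
  · ext x
    exact ⟨fun hx => ⟨φ ⟨x, hx⟩, by simp⟩, by rintro ⟨j, rfl⟩; exact (φ.symm j).2⟩
  · ext e
    induction e with | h x y => ?_
    constructor
    · intro hxy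
      have hx : x ∈ C.verts := C.edge_vert hxy
      have hy : y ∈ C.verts := C.edge_vert hxy.symm
      have hadj : (cycleGraph (n + 2)).Adj (φ ⟨x, hx⟩) (φ ⟨y, hy⟩) :=
        φ.map_rel_iff.mpr hxy
      rcases cycleGraph_adj.mp hadj with h | h
      · exact ⟨φ ⟨y, hy⟩, by simp [← sub_eq_iff_eq_add'.mp h, Sym2.eq_swap]⟩
      · exact ⟨φ ⟨x, hx⟩, by simp [← sub_eq_iff_eq_add'.mp h]⟩
    · rintro ⟨j, hj⟩
      rw [← hj]
      exact φ.symm.map_rel_iff.mpr (cycleGraph_adj.mpr (Or.inr (add_sub_cancel_left j 1)))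

namespace IsCycleSubgraph

variable {V : Type*} {G : SimpleGraph V} {k : ℕ} {H C : G.Subgraph}

theorem ncard_verts_sup_diff_le (hC : IsCycleSubgraph G (k + 3) C)
    (hshared : (C.edgeSet ∩ H.edgeSet).Nonempty) :
    ((H ⊔ C).verts \ H.verts).ncard ≤ k + 1 := by
  obtain ⟨ψ, hψ, hV, hE⟩ := hC.exists_labelling
  obtain ⟨e, heC, heH⟩ := hshared
  rw [hE] at heC
  obtain ⟨j, rfl⟩ := heC
  rw [Subgraph.verts_sup, hV, Set.ncard_union_diff_left_eq_ncard_preimage_compl hψ]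
  have hsub : ψ ⁻¹' H.vertsᶜ ⊆ {j, j + 1}ᶜ := by
    rintro i hi (rfl | rfl)
    · exact hi (H.mem_verts_of_mem_edge heH (Sym2.mem_mk_left _ _))
    · exact hi (H.mem_verts_of_mem_edge heH (Sym2.mem_mk_right _ _))
  have hpair : ({j, j + 1} : Set (Fin (k + 3))).ncard = 2 :=
    Set.ncard_pair fun h => by simpa using congrArg (· - j) h
  have hcompl := Set.ncard_add_ncard_compl ({j, j + 1} : Set (Fin (k + 3)))
  rw [hpair, Nat.card_eq_fintype_card, Fintype.card_fin] at hcompl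
  have hle := Set.ncard_le_ncard hsub
  omega

theorem ncard_verts_sup_diff_add_one_le (hC : IsCycleSubgraph G (k + 3) C) (hCH : ¬C ≤ H)
    (hshared : (C.edgeSet ∩ H.edgeSet).Nonempty) :
    ((H ⊔ C).verts \ H.verts).ncard + 1 ≤ ((H ⊔ C).edgeSet \ H.edgeSet).ncard := by
  obtain ⟨ψ, hψ, hV, hE⟩ := hC.exists_labelling
  rw [Subgraph.verts_sup, hV, Set.ncard_union_diff_left_eq_ncard_preimage_compl hψ,
    Subgraph.edgeSet_sup, hE,
    Set.ncard_union_diff_left_eq_ncard_preimage_compl (Fin.injective_sym2_mk_succ hψ)]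
  refine Fin.ncard_add_one_le_of_forall_mem (fun j hj => ⟨fun h => hj ?_, fun h => hj ?_⟩) ?_ ?_
  · exact H.mem_verts_of_mem_edge h (Sym2.mem_mk_left _ _)
  · simpa using H.mem_verts_of_mem_edge h (Sym2.mem_mk_right _ _)
  · by_contra hnew
    have hold : ∀ j, s(ψ j, ψ (j + 1)) ∈ H.edgeSet := fun j => not_not.mp fun h => hnew ⟨j, h⟩
    have hCE : C.edgeSet ⊆ H.edgeSet := hE ▸ Set.range_subset_iff.mpr hold
    refine hCH ⟨fun x hx => ?_, fun x y hxy => Subgraph.mem_edgeSet.mp (hCE hxy)⟩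
    obtain ⟨j, rfl⟩ := hV ▸ hx
    exact H.mem_verts_of_mem_edge (hold j) (Sym2.mem_mk_left _ _)
  · obtain ⟨e, heC, heH⟩ := hshared
    rw [hE] at heC
    obtain ⟨j, rfl⟩ := heC
    exact (Set.ne_univ_iff_exists_notMem _).mpr ⟨j, fun hj => hj heH⟩

end IsCycleSubgraph

theorem construction_step_counts_general {V : Type*}
    (ℓ : ℕ) (hℓ : 3 ≤ ℓ) (G : SimpleGraph V)
    (t : ℕ) (H : ℕ → G.Subgraph) (hH : IsConstructionSeq G ℓ t H) :
    ∀ i, 1 ≤ i → i < t →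
      ((H (i + 1)).verts \ (H i).verts).ncard + 1 ≤
          ((H (i + 1)).edgeSet \ (H i).edgeSet).ncard ∧
        ((H (i + 1)).verts \ (H i).verts).ncard ≤ ℓ - 2 := by
  intro i hi hit
  obtain ⟨C, hC, hCH, hshared, hsucc⟩ := hH.2.2 i hi hit
  obtain ⟨k, rfl⟩ : ∃ k, ℓ = k + 3 := ⟨ℓ - 3, by omega⟩
  rw [hsucc]
  exact ⟨hC.ncard_verts_sup_diff_add_one_le hCH hshared, hC.ncard_verts_sup_diff_le hshared⟩

/-- In a construction sequence of `ℓ`-cycles, for every `1 ≤ i ≤ t-1`, setting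
`e i = |E(H (i+1)) \\ E(H i)|` and `v i = |V(H (i+1)) \\ V(H i)|`, we have
`e i ≥ v i + 1` and `v i ≤ ℓ - 2`. -/
theorem construction_step_counts {V : Type*} [Fintype V]
    (ℓ : ℕ) (hℓ : 3 ≤ ℓ) (G : SimpleGraph V)
    (t : ℕ) (H : ℕ → G.Subgraph) (hH : IsConstructionSeq G ℓ t H) :
    ∀ i, 1 ≤ i → i < t →
      ((H (i + 1)).verts \ (H i).verts).ncard + 1 ≤
          ((H (i + 1)).edgeSet \ (H i).edgeSet).ncard ∧
        ((H (i + 1)).verts \ (H i).verts).ncard ≤ ℓ - 2 :=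
  construction_step_counts_general ℓ hℓ G t H hH
end

section
/- Let ℓ ≥ 5 be an integer and let G be a graph such that every subgraph J of G with at least one vertex satisfies (ℓ−2)·e(J) < (ℓ−1)·v(J) (i.e. m(G) < (ℓ−1)/(ℓ−2)). Let (H₁,…,H_t) be a construction sequence of ℓ-cycles in G. Then there is at most one index 1 ≤ i ≤ t−1 with V(H_{i+1}) = V(H_i), i.e. at most one step of the sequence adds no new vertex (configuration (A_ℓ) appears at most once). -/
/-!
Track the slack `σ(J) = (ℓ - 1) v(J) - (ℓ - 2) e(J)`, which the density hypothesis keeps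
nonnegative. The first cycle has `σ = ℓ`. Adding an `ℓ`-cycle that shares an edge with
the current graph and is not contained in it brings `n ≤ ℓ - 2` new vertices and at least
`n + 1` new edges, so `σ` changes by at most `n - (ℓ - 2) ≤ 0`. A step with no new vertex
lowers `σ` by at least `ℓ - 2`. After two such steps `σ ≤ ℓ - 2 (ℓ - 2) = 4 - ℓ < 0`.
-/

open Set Function SimpleGraph
open scoped Fin.NatCast

namespace Fin

lemma eq_univ_of_add_one_mem {n : ℕ} [NeZero n] {S : Set (Fin n)} (hS : S.Nonempty)
    (h : ∀ x ∈ S, x + 1 ∈ S) : S = univ := by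
  obtain ⟨x₀, hx₀⟩ := hS
  have hreach : ∀ m : ℕ, x₀ + (m : Fin n) ∈ S := by
    intro m
    induction m with
    | zero => simpa using hx₀
    | succ k ih => simpa [add_assoc] using h _ ih
  refine eq_univ_of_forall fun y => ?_
  simpa using hreach (y - x₀).val

lemma ssubset_of_forall_mem_add_one {n : ℕ} [NeZero n] {O S : Set (Fin n)}
    (hO : ∀ x ∈ O, x ∈ S ∧ x + 1 ∈ S) (hne : O.Nonempty) (huniv : O ≠ univ) : O ⊂ S :=
  ⟨fun x hx => (hO x hx).1,
    fun hSO => huniv (eq_univ_of_add_one_mem hne fun x hx => hSO (hO x hx).2)⟩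

lemma val_one_of_two_le {n : ℕ} [NeZero n] (hn : 2 ≤ n) : ((1 : Fin n) : ℕ) = 1 := by
  rw [Fin.val_one', Nat.mod_eq_of_lt hn]

lemma injective_sym2_add_one {n : ℕ} [NeZero n] (hn : 3 ≤ n) :
    Injective fun x : Fin n => s(x, x + 1) := by
  intro x y hxy
  rcases Sym2.eq_iff.mp hxy with ⟨h, -⟩ | ⟨hx, hy⟩
  · exact h
  · have h2 : ((1 + 1 : Fin n) : ℕ) = 0 := by
      rw [add_eq_left.mp (show y + (1 + 1) = y by rw [← add_assoc, ← hx, hy])]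
      rfl
    rw [Fin.val_add, val_one_of_two_le (by omega), Nat.mod_eq_of_lt (by omega)] at h2
    omega

end Fin

lemma SimpleGraph.cycleGraph_edgeSet {n : ℕ} [NeZero n] (hn : 2 ≤ n) :
    (cycleGraph n).edgeSet = range fun x => s(x, x + 1) := by
  ext e
  induction e using Sym2.ind with
  | h u v =>
    have hsucc : ∀ a b : Fin n, (a - b).val = 1 ↔ a = b + 1 := fun a b => by
      rw [← Fin.val_one_of_two_le hn, Fin.val_inj, sub_eq_iff_eq_add, add_comm]
    simp only [mem_edgeSet, cycleGraph_adj', hsucc, mem_range, Sym2.eq_iff]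
    constructor
    · rintro (rfl | rfl)
      exacts [⟨v, Or.inr ⟨rfl, rfl⟩⟩, ⟨u, Or.inl ⟨rfl, rfl⟩⟩]
    · rintro ⟨y, ⟨rfl, rfl⟩ | ⟨rfl, rfl⟩⟩
      exacts [Or.inr rfl, Or.inl rfl]

section

variable {V : Type*} {G : SimpleGraph V} {ℓ : ℕ} {A C : G.Subgraph}

lemma IsCycleSubgraph.ncard_verts (hC : IsCycleSubgraph G ℓ C) : C.verts.ncard = ℓ := by
  obtain ⟨φ⟩ := hC
  rw [← Nat.card_coe_set_eq, Nat.card_congr φ.toEquiv, Nat.card_fin]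

lemma SimpleGraph.Subgraph.ncard_verts_sdiff_add_two_le (hfin : C.verts.Finite)
    (hshare : (C.edgeSet ∩ A.edgeSet).Nonempty) :
    (C.verts \ A.verts).ncard + 2 ≤ C.verts.ncard := by
  obtain ⟨e, heC, heA⟩ := hshare
  induction e using Sym2.ind with
  | h u v =>
    have hsub : {u, v} ⊆ C.verts ∩ A.verts := by
      simp only [insert_subset_iff, singleton_subset_iff, mem_inter_iff]
      exact ⟨⟨C.edge_vert heC, A.edge_vert heA⟩, C.edge_vert heC.symm, A.edge_vert heA.symm⟩
    have h2 := ncard_le_ncard hsub (hfin.inter_of_left _)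
    rw [ncard_pair (G.ne_of_adj (C.adj_sub heC))] at h2
    rw [← ncard_inter_add_ncard_sdiff_eq_ncard C.verts A.verts hfin]
    omega

section Enumeration

variable [NeZero ℓ]

lemma IsCycleSubgraph.exists_enum (hℓ : 2 ≤ ℓ) (hC : IsCycleSubgraph G ℓ C) :
    ∃ ψ : Fin ℓ → V, Injective ψ ∧ C.verts = range ψ ∧
      C.edgeSet = range fun x => s(ψ x, ψ (x + 1)) := by
  obtain ⟨φ⟩ := hC
  refine ⟨Subtype.val ∘ φ.symm, Subtype.val_injective.comp φ.symm.injective, ?_, ?_⟩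
  · rw [range_comp, φ.symm.surjective.range_eq, image_univ, Subtype.range_coe]
  · have hcoe : C.coe.edgeSet = Sym2.map φ.symm '' (cycleGraph ℓ).edgeSet := by
      rw [← φ.symm.toEmbedding.preimage_edgeSet]
      exact (image_preimage_eq _ fun e => ⟨Sym2.map φ e, by simp [Sym2.map_map]⟩).symm
    rw [← C.image_coe_edgeSet_coe, hcoe, cycleGraph_edgeSet hℓ, ← range_comp, ← range_comp]
    rfl

lemma Function.Injective.sym2_add_one {ψ : Fin ℓ → V} (hψ : Injective ψ) (hℓ : 3 ≤ ℓ) :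
    Injective fun x => s(ψ x, ψ (x + 1)) :=
  (Sym2.map.injective hψ).comp (Fin.injective_sym2_add_one hℓ)

lemma IsCycleSubgraph.ncard_edgeSet (hℓ : 3 ≤ ℓ) (hC : IsCycleSubgraph G ℓ C) :
    C.edgeSet.ncard = ℓ := by
  obtain ⟨ψ, hψ, -, hE⟩ := hC.exists_enum (by omega)
  rw [hE, ← image_univ, ncard_image_of_injective _ (hψ.sym2_add_one hℓ), ncard_univ,
    Nat.card_fin]

/-- Index the cycle by `Fin ℓ`; with `S` the indices of old vertices and `O` those of old
edges `x — x+1`, the set `O` is a proper subset of `S`: otherwise `S` would be closed under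
`+1`, hence everything, and `C ≤ A`. -/
lemma IsCycleSubgraph.ncard_verts_sdiff_lt (hℓ : 3 ≤ ℓ) (hC : IsCycleSubgraph G ℓ C)
    (hshare : (C.edgeSet ∩ A.edgeSet).Nonempty) (hnle : ¬ C ≤ A) :
    (C.verts \ A.verts).ncard < (C.edgeSet \ A.edgeSet).ncard := by
  obtain ⟨ψ, hψ, hV, hE⟩ := hC.exists_enum (by omega)
  set g := fun x => s(ψ x, ψ (x + 1))
  set S := ψ ⁻¹' A.verts
  set O := g ⁻¹' A.edgeSet
  have hOS : ∀ x ∈ O, x ∈ S ∧ x + 1 ∈ S := fun x hx => ⟨A.edge_vert hx, A.edge_vert hx.symm⟩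
  have hO : O.Nonempty := by
    obtain ⟨e, heC, heA⟩ := hshare
    rw [hE] at heC
    obtain ⟨x, rfl⟩ := heC
    exact ⟨x, heA⟩
  have hO' : O ≠ univ := by
    intro hO'
    have hall : ∀ x, x ∈ O := eq_univ_iff_forall.mp hO'
    refine hnle ⟨?_, fun u v huv => ?_⟩
    · rw [hV, range_subset_iff]
      exact fun x => (hOS x (hall x)).1
    · obtain ⟨x, hx⟩ : s(u, v) ∈ range g := hE ▸ huv
      show s(u, v) ∈ A.edgeSet
      rw [← hx]
      exact hall x
  rw [hV, hE, ← image_compl_preimage, ← image_compl_preimage,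
    ncard_image_of_injective _ hψ, ncard_image_of_injective _ (hψ.sym2_add_one hℓ)]
  exact ncard_lt_ncard (compl_lt_compl_iff_lt.mpr (Fin.ssubset_of_forall_mem_add_one hOS hO hO'))

end Enumeration

noncomputable def SimpleGraph.Subgraph.densitySlack (ℓ : ℕ) (J : G.Subgraph) : ℤ :=
  (ℓ - 1 : ℤ) * J.verts.ncard - (ℓ - 2 : ℤ) * J.edgeSet.ncard

namespace SimpleGraph.Subgraph

lemma densitySlack_nonneg (hℓ : 2 ≤ ℓ)
    (hG : ∀ J : G.Subgraph, J.verts.Nonempty →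
      (ℓ - 2) * J.edgeSet.ncard < (ℓ - 1) * J.verts.ncard)
    (J : G.Subgraph) : 0 ≤ J.densitySlack ℓ := by
  rcases J.verts.eq_empty_or_nonempty with hJ | hJ
  · rw [← eq_bot_iff_verts_eq_empty] at hJ
    simp [densitySlack, hJ]
  · have h := hG J hJ
    zify [hℓ, (by omega : 1 ≤ ℓ)] at h
    unfold densitySlack
    linarith

variable [NeZero ℓ] [Finite V]

lemma densitySlack_sup_le_sub (hℓ : 3 ≤ ℓ) (hC : IsCycleSubgraph G ℓ C)
    (hshare : (C.edgeSet ∩ A.edgeSet).Nonempty) (hnle : ¬ C ≤ A) :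
    (A ⊔ C).densitySlack ℓ ≤ A.densitySlack ℓ - (ℓ - 2) + (C.verts \ A.verts).ncard := by
  have hv : (A ⊔ C).verts.ncard = (C.verts \ A.verts).ncard + A.verts.ncard := by
    rw [verts_sup, union_comm, ncard_sdiff_add_ncard]
  have he : (A ⊔ C).edgeSet.ncard = (C.edgeSet \ A.edgeSet).ncard + A.edgeSet.ncard := by
    rw [edgeSet_sup, union_comm, ncard_sdiff_add_ncard]
  have hnew : ((C.verts \ A.verts).ncard + 1 : ℤ) ≤ (C.edgeSet \ A.edgeSet).ncard := by
    exact_mod_cast hC.ncard_verts_sdiff_lt hℓ hshare hnle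
  have hℓ2 : (0 : ℤ) ≤ ℓ - 2 := by omega
  unfold densitySlack
  rw [hv, he]
  push_cast
  nlinarith [mul_le_mul_of_nonneg_left hnew hℓ2]

lemma densitySlack_sup_le (hℓ : 3 ≤ ℓ) (hC : IsCycleSubgraph G ℓ C)
    (hshare : (C.edgeSet ∩ A.edgeSet).Nonempty) (hnle : ¬ C ≤ A) :
    (A ⊔ C).densitySlack ℓ ≤ A.densitySlack ℓ := by
  have hnew := ncard_verts_sdiff_add_two_le (toFinite _) hshare
  rw [hC.ncard_verts] at hnew
  have := densitySlack_sup_le_sub hℓ hC hshare hnle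
  omega

lemma densitySlack_sup_le_of_verts_eq (hℓ : 3 ≤ ℓ) (hC : IsCycleSubgraph G ℓ C)
    (hshare : (C.edgeSet ∩ A.edgeSet).Nonempty) (hnle : ¬ C ≤ A)
    (hverts : (A ⊔ C).verts = A.verts) :
    (A ⊔ C).densitySlack ℓ ≤ A.densitySlack ℓ - (ℓ - 2) := by
  have hsub : C.verts ⊆ A.verts := hverts ▸ subset_union_right
  simpa [sdiff_eq_empty.mpr hsub] using densitySlack_sup_le_sub hℓ hC hshare hnle

end SimpleGraph.Subgraph

namespace IsConstructionSeq

open SimpleGraph.Subgraph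

variable [NeZero ℓ] {t : ℕ} {H : ℕ → G.Subgraph} (hH : IsConstructionSeq G ℓ t H)
  (hℓ : 3 ≤ ℓ)
include hH hℓ

lemma densitySlack_one : (H 1).densitySlack ℓ = ℓ := by
  rw [densitySlack, hH.2.1.ncard_verts, hH.2.1.ncard_edgeSet hℓ]
  ring

variable [Finite V]

lemma densitySlack_succ_le {k : ℕ} (hk : 1 ≤ k) (hkt : k < t) :
    (H (k + 1)).densitySlack ℓ ≤ (H k).densitySlack ℓ := by
  obtain ⟨C, hC, hnle, hshare, hsup⟩ := hH.2.2 k hk hkt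
  rw [hsup]
  exact densitySlack_sup_le hℓ hC hshare hnle

lemma densitySlack_antitone {i j : ℕ} (hi : 1 ≤ i) (hij : i ≤ j) (hjt : j ≤ t) :
    (H j).densitySlack ℓ ≤ (H i).densitySlack ℓ := by
  induction j, hij using Nat.le_induction with
  | base => exact le_rfl
  | succ j hij ih => exact (hH.densitySlack_succ_le hℓ (by omega) hjt).trans (ih (by omega))

lemma densitySlack_succ_le_of_verts_eq {k : ℕ} (hk : 1 ≤ k) (hkt : k < t)
    (hverts : (H (k + 1)).verts = (H k).verts) :
    (H (k + 1)).densitySlack ℓ ≤ (H k).densitySlack ℓ - (ℓ - 2) := by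
  obtain ⟨C, hC, hnle, hshare, hsup⟩ := hH.2.2 k hk hkt
  rw [hsup] at hverts ⊢
  exact densitySlack_sup_le_of_verts_eq hℓ hC hshare hnle hverts

lemma densitySlack_le_of_two_verts_eq {i j : ℕ} (hi : 1 ≤ i) (hij : i < j) (hjt : j < t)
    (hvi : (H (i + 1)).verts = (H i).verts) (hvj : (H (j + 1)).verts = (H j).verts) :
    (H (j + 1)).densitySlack ℓ ≤ ℓ - 2 * (ℓ - 2) := by
  have hj := hH.densitySlack_succ_le_of_verts_eq hℓ (by omega) hjt hvj
  have hij' := hH.densitySlack_antitone hℓ (by omega) hij hjt.le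
  have hi' := hH.densitySlack_succ_le_of_verts_eq hℓ hi (by omega) hvi
  have h1i := hH.densitySlack_antitone hℓ le_rfl hi (by omega)
  rw [hH.densitySlack_one hℓ] at h1i
  linarith

end IsConstructionSeq

end

/-- In a construction sequence of `ℓ`-cycles in a graph `G` with `m(G) < (ℓ-1)/(ℓ-2)`,
at most one step adds no new vertex (configuration `(A_ℓ)` appears at most once). -/
theorem configuration_A_ell_at_most_once {V : Type*} [Fintype V]
    (ℓ : ℕ) (hℓ : 5 ≤ ℓ) (G : SimpleGraph V)
    (hG : ∀ J : G.Subgraph, J.verts.Nonempty →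
      (ℓ - 2) * J.edgeSet.ncard < (ℓ - 1) * J.verts.ncard)
    (t : ℕ) (H : ℕ → G.Subgraph) (hH : IsConstructionSeq G ℓ t H) :
    {i : ℕ | 1 ≤ i ∧ i < t ∧ (H (i + 1)).verts = (H i).verts}.Subsingleton := by
  have : NeZero ℓ := ⟨by omega⟩
  intro i hi j hj
  by_contra hne
  wlog hij : i < j generalizing i j
  · exact this hj hi (Ne.symm hne) (by omega)
  have hslack := hH.densitySlack_le_of_two_verts_eq (by omega) hi.1 hij hj.2.1 hi.2.2 hj.2.2
  have := SimpleGraph.Subgraph.densitySlack_nonneg (by omega) hG (H (j + 1))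
  omega
end

section
/- Let ℓ ≥ 5 be an integer and let G be a graph such that every subgraph J of G with at least one vertex satisfies (ℓ−2)·e(J) < (ℓ−1)·v(J) (i.e. m(G) < (ℓ−1)/(ℓ−2)). Let (H₁,…,H_t) be a construction sequence of ℓ-cycles in G. Then there are at most two indices 1 ≤ i ≤ t−1 with |V(H_{i+1}) \ V(H_i)| = 1, i.e. at most two steps of the sequence add exactly one new vertex (configuration (A_{ℓ−1}) appears at most twice). -/
open SimpleGraph Set
open scoped Fin.NatCast Fin.CommRing

theorem Fin.exists_mem_sub_one_notMem_s12 {n : ℕ} [NeZero n] {T : Set (Fin n)} (hT : T.Nonempty)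
    (hT' : T ≠ univ) : ∃ i ∈ T, i - 1 ∉ T := by
  by_contra! hclosed
  obtain ⟨j, hj⟩ := hT
  have hsub : ∀ k : ℕ, j - k ∈ T := by
    intro k
    induction k with
    | zero => simpa using hj
    | succ k ih => simpa [sub_sub] using hclosed _ ih
  refine hT' (eq_univ_of_forall fun i ↦ ?_)
  simpa using hsub (j - i).val

theorem SimpleGraph.cycleGraph_adj_iff_eq_add_one {n : ℕ} [NeZero n] (hn : 2 ≤ n) {u v : Fin n} :
    (cycleGraph n).Adj u v ↔ u = v + 1 ∨ v = u + 1 := by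
  have h1 : ((1 : Fin n) : ℕ) = 1 := by rw [Fin.val_one', Nat.mod_eq_of_lt (by omega)]
  rw [cycleGraph_adj', ← h1, ← Fin.ext_iff, ← Fin.ext_iff, sub_eq_iff_eq_add, sub_eq_iff_eq_add,
    add_comm 1, add_comm 1]

theorem Fin.one_add_one_ne_zero {n : ℕ} [NeZero n] (hn : 3 ≤ n) : (1 + 1 : Fin n) ≠ 0 := by
  rw [Ne, Fin.ext_iff, Fin.val_add, Fin.val_one' n, Nat.mod_eq_of_lt (by omega : 1 < n),
    Nat.mod_eq_of_lt (by omega : 1 + 1 < n)]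
  simp

namespace IsCycleSubgraph

variable {V : Type*} {G : SimpleGraph V} {ℓ : ℕ} {C : G.Subgraph}

theorem exists_enumeration [NeZero ℓ] (hC : IsCycleSubgraph G ℓ C) (hℓ : 3 ≤ ℓ) :
    ∃ w : Fin ℓ → V, Function.Injective w ∧ range w = C.verts ∧
      Function.Injective (fun i ↦ s(w i, w (i + 1))) ∧
      range (fun i ↦ s(w i, w (i + 1))) = C.edgeSet := by
  obtain ⟨φ⟩ := hC
  have hadj : ∀ {u v : C.verts}, C.Adj u v ↔ φ u = φ v + 1 ∨ φ v = φ u + 1 := fun {u v} ↦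
    φ.map_adj_iff.symm.trans (cycleGraph_adj_iff_eq_add_one (by omega))
  refine ⟨fun i ↦ φ.symm i, Subtype.val_injective.comp φ.symm.injective, ?_, ?_, ?_⟩
  · refine (range_subset_iff.2 fun i ↦ (φ.symm i).2).antisymm fun v hv ↦ ?_
    exact ⟨φ ⟨v, hv⟩, by simp⟩
  · intro i j hij
    rcases Sym2.eq_iff.1 hij with ⟨h, -⟩ | ⟨h₁, h₂⟩
    · exact φ.symm.injective (Subtype.val_injective h)
    · have hi : i = j + 1 := φ.symm.injective (Subtype.val_injective h₁)
      have hj : i + 1 = j := φ.symm.injective (Subtype.val_injective h₂)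
      exact absurd (by simpa [hi, add_assoc] using hj) (Fin.one_add_one_ne_zero hℓ)
  · refine (range_subset_iff.2 fun i ↦ ?_).antisymm fun e he ↦ ?_
    · simpa using (hadj (u := φ.symm i) (v := φ.symm (i + 1))).2 (Or.inr (by simp))
    · induction e using Sym2.ind with
      | h u v =>
        have hu := C.edge_vert he
        have hv := C.edge_vert (C.adj_symm he)
        rcases hadj (u := ⟨u, hu⟩) (v := ⟨v, hv⟩) |>.1 he with h | h
        · exact ⟨φ ⟨v, hv⟩, by simp [← h, Sym2.eq_swap]⟩
        · exact ⟨φ ⟨u, hu⟩, by simp [← h]⟩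


theorem ncard_verts_s12 (hC : IsCycleSubgraph G ℓ C) : C.verts.ncard = ℓ := by
  obtain ⟨φ⟩ := hC
  rw [← Nat.card_coe_set_eq, Nat.card_congr φ.toEquiv, Nat.card_eq_fintype_card, Fintype.card_fin]

theorem ncard_edgeSet_s12 (hC : IsCycleSubgraph G ℓ C) (hℓ : 3 ≤ ℓ) : C.edgeSet.ncard = ℓ := by
  have : NeZero ℓ := ⟨by omega⟩
  obtain ⟨w, -, -, he, her⟩ := hC.exists_enumeration hℓ
  rw [← her, ncard_range_of_injective he, Nat.card_eq_fintype_card, Fintype.card_fin]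

theorem ncard_edgeSet_diff_lt (hC : IsCycleSubgraph G ℓ C) (hℓ : 3 ≤ ℓ) {H : G.Subgraph}
    (hshare : (C.edgeSet ∩ H.edgeSet).Nonempty) : (C.edgeSet \ H.edgeSet).ncard < ℓ := by
  rw [← hC.ncard_edgeSet_s12 hℓ]
  exact ncard_lt_ncard (sdiff_ssubset_left_iff.2 hshare)
    (finite_of_ncard_pos (by rw [hC.ncard_edgeSet_s12 hℓ]; omega))

theorem ncard_verts_diff_lt (hC : IsCycleSubgraph G ℓ C) (hℓ : 3 ≤ ℓ) {H : G.Subgraph}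
    (hCH : ¬ C ≤ H) (hshare : (C.edgeSet ∩ H.edgeSet).Nonempty) :
    (C.verts \ H.verts).ncard < (C.edgeSet \ H.edgeSet).ncard := by
  have : NeZero ℓ := ⟨by omega⟩
  obtain ⟨w, hw, hwr, he, her⟩ := hC.exists_enumeration hℓ
  set e : Fin ℓ → Sym2 V := fun i ↦ s(w i, w (i + 1))
  -- `T` indexes the new edges. A new vertex `w i` makes both `e (i - 1)` and `e i` new, whereas
  -- the first edge of an arc of new edges starts at an old vertex.
  set T := e ⁻¹' (C.edgeSet \ H.edgeSet)
  have hnew : ∀ {i j}, w i ∉ H.verts → e j ∈ C.edgeSet → w i ∈ e j → j ∈ T :=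
    fun hi hj hij ↦ ⟨hj, fun hH ↦ hi (H.mem_verts_of_mem_edge hH hij)⟩
  have hvert : w ⁻¹' (C.verts \ H.verts) ⊆ {i | i ∈ T ∧ i - 1 ∈ T} := by
    rintro i ⟨-, hi⟩
    exact ⟨hnew hi (her ▸ mem_range_self i) (Sym2.mem_mk_left _ _),
      hnew hi (her ▸ mem_range_self (i - 1)) (by simp [e])⟩
  have hT : T.Nonempty := by
    by_contra hT
    rw [not_nonempty_iff_eq_empty] at hT
    have hold : ∀ i, e i ∈ H.edgeSet := fun i ↦ by
      by_contra h
      exact (hT ▸ (⟨her ▸ mem_range_self i, h⟩ : i ∈ T) : i ∈ (∅ : Set (Fin ℓ)))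
    refine hCH ⟨?_, fun u v huv ↦ ?_⟩
    · rw [← hwr]
      rintro _ ⟨i, rfl⟩
      exact H.mem_verts_of_mem_edge (hold i) (Sym2.mem_mk_left _ _)
    · obtain ⟨i, hi⟩ : s(u, v) ∈ range e := her ▸ huv
      exact Subgraph.mem_edgeSet.1 (hi ▸ hold i)
  have hT' : T ≠ univ := by
    obtain ⟨_, hC', hH⟩ := hshare
    obtain ⟨i, rfl⟩ := her.symm ▸ hC'
    exact fun h ↦ (h.symm ▸ mem_univ i : i ∈ T).2 hH
  obtain ⟨i, hiT, hi⟩ := Fin.exists_mem_sub_one_notMem_s12 hT hT'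
  calc (C.verts \ H.verts).ncard = (w ⁻¹' (C.verts \ H.verts)).ncard :=
        (ncard_preimage_of_injective_subset_range hw (hwr ▸ sdiff_subset)).symm
    _ ≤ {i | i ∈ T ∧ i - 1 ∈ T}.ncard := ncard_le_ncard hvert
    _ < T.ncard := ncard_lt_ncard ⟨fun _ h ↦ h.1, fun h ↦ hi (h hiT).2⟩
    _ = (C.edgeSet \ H.edgeSet).ncard :=
        ncard_preimage_of_injective_subset_range he (her ▸ sdiff_subset)

end IsCycleSubgraph

namespace SimpleGraph.Subgraph

variable {V : Type*} {G : SimpleGraph V}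

noncomputable def potential (ℓ : ℕ) (J : G.Subgraph) : ℤ :=
  ((ℓ : ℤ) - 1) * J.verts.ncard - ((ℓ : ℤ) - 2) * J.edgeSet.ncard

theorem one_le_potential {ℓ : ℕ} (hℓ : 2 ≤ ℓ) {J : G.Subgraph}
    (hJ : (ℓ - 2) * J.edgeSet.ncard < (ℓ - 1) * J.verts.ncard) : 1 ≤ J.potential ℓ := by
  have hJ' : (((ℓ - 2 : ℕ) * J.edgeSet.ncard : ℕ) : ℤ) < ((ℓ - 1 : ℕ) * J.verts.ncard : ℕ) := by
    exact_mod_cast hJ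
  push_cast [Nat.cast_sub (by omega : 2 ≤ ℓ), Nat.cast_sub (by omega : 1 ≤ ℓ)] at hJ'
  rw [potential]
  omega

theorem potential_sup [Finite V] (ℓ : ℕ) (H C : G.Subgraph) :
    (H ⊔ C).potential ℓ = H.potential ℓ + ((ℓ : ℤ) - 1) * (C.verts \ H.verts).ncard -
      ((ℓ : ℤ) - 2) * (C.edgeSet \ H.edgeSet).ncard := by
  have hv : (H ⊔ C).verts.ncard = H.verts.ncard + (C.verts \ H.verts).ncard := by
    rw [verts_sup, ← union_sdiff_self, ncard_union_eq disjoint_sdiff_right]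
  have he : (H ⊔ C).edgeSet.ncard = H.edgeSet.ncard + (C.edgeSet \ H.edgeSet).ncard := by
    rw [edgeSet_sup, ← union_sdiff_self, ncard_union_eq disjoint_sdiff_right]
  simp only [potential, hv, he]
  push_cast
  ring

end SimpleGraph.Subgraph

namespace IsCycleSubgraph

variable {V : Type*} {G : SimpleGraph V} {ℓ : ℕ} {C : G.Subgraph}

theorem potential_eq (hC : IsCycleSubgraph G ℓ C) (hℓ : 3 ≤ ℓ) : C.potential ℓ = ℓ := by
  rw [Subgraph.potential, hC.ncard_verts_s12, hC.ncard_edgeSet_s12 hℓ]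
  ring

variable [Finite V] {H : G.Subgraph}

theorem potential_sup_le (hC : IsCycleSubgraph G ℓ C) (hℓ : 3 ≤ ℓ) (hCH : ¬ C ≤ H)
    (hshare : (C.edgeSet ∩ H.edgeSet).Nonempty) : (H ⊔ C).potential ℓ ≤ H.potential ℓ := by
  have hvert := hC.ncard_verts_diff_lt hℓ hCH hshare
  have hedge := hC.ncard_edgeSet_diff_lt hℓ hshare
  rw [Subgraph.potential_sup]
  nlinarith

theorem potential_sup_add_le_of_ncard_eq_one (hC : IsCycleSubgraph G ℓ C) (hℓ : 3 ≤ ℓ)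
    (hCH : ¬ C ≤ H) (hshare : (C.edgeSet ∩ H.edgeSet).Nonempty)
    (hone : ((H ⊔ C).verts \ H.verts).ncard = 1) :
    (H ⊔ C).potential ℓ + (ℓ - 3) ≤ H.potential ℓ := by
  rw [Subgraph.verts_sup, union_sdiff_left] at hone
  have hvert := hC.ncard_verts_diff_lt hℓ hCH hshare
  have hedge : (2 : ℤ) ≤ (C.edgeSet \ H.edgeSet).ncard := by exact_mod_cast hone ▸ hvert
  have hℓ' : (3 : ℤ) ≤ ℓ := by exact_mod_cast hℓ
  rw [Subgraph.potential_sup, hone, Nat.cast_one]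
  nlinarith [mul_le_mul_of_nonneg_left hedge (by linarith : (0 : ℤ) ≤ ℓ - 2)]

end IsCycleSubgraph

open Finset in
theorem add_mul_card_filter_le {f : ℕ → ℤ} {d : ℤ} {p : ℕ → Prop} [DecidablePred p] {a b : ℕ}
    (hab : a ≤ b) (hle : ∀ i, a ≤ i → i < b → f (i + 1) ≤ f i)
    (hdrop : ∀ i, a ≤ i → i < b → p i → f (i + 1) + d ≤ f i) :
    f b + d * #{i ∈ Finset.Ico a b | p i} ≤ f a := by
  induction b, hab using Nat.le_induction with
  | base => simp
  | succ b hab ih =>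
    have ih := ih (fun i hi hib ↦ hle i hi (by omega)) (fun i hi hib ↦ hdrop i hi (by omega))
    rw [Nat.Ico_succ_right_eq_insert_Ico hab, Finset.filter_insert]
    by_cases hb : p b
    · rw [if_pos hb, Finset.card_insert_of_notMem (by simp)]
      push_cast
      linarith [hdrop b hab b.lt_succ_self hb]
    · rw [if_neg hb]
      linarith [hle b hab b.lt_succ_self]

namespace IsConstructionSeq

variable {V : Type*} {G : SimpleGraph V} {ℓ t : ℕ} {H : ℕ → G.Subgraph}

theorem first_le (hH : IsConstructionSeq G ℓ t H) {j : ℕ} (hj : 1 ≤ j) (hjt : j ≤ t) : H 1 ≤ H j := by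
  induction j, hj using Nat.le_induction with
  | base => rfl
  | succ j hj ih =>
    obtain ⟨C, -, -, -, hsucc⟩ := hH.2.2 j hj (by omega)
    exact (ih (by omega)).trans (hsucc ▸ le_sup_left)

variable [Finite V]

theorem potential_succ_le (hH : IsConstructionSeq G ℓ t H) (hℓ : 3 ≤ ℓ) {i : ℕ} (hi : 1 ≤ i)
    (hit : i < t) : (H (i + 1)).potential ℓ ≤ (H i).potential ℓ := by
  obtain ⟨C, hC, hCH, hshare, hsucc⟩ := hH.2.2 i hi hit
  exact hsucc ▸ hC.potential_sup_le hℓ hCH hshare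

theorem potential_succ_add_le (hH : IsConstructionSeq G ℓ t H) (hℓ : 3 ≤ ℓ) {i : ℕ} (hi : 1 ≤ i)
    (hit : i < t) (hone : ((H (i + 1)).verts \ (H i).verts).ncard = 1) :
    (H (i + 1)).potential ℓ + (ℓ - 3) ≤ (H i).potential ℓ := by
  obtain ⟨C, hC, hCH, hshare, hsucc⟩ := hH.2.2 i hi hit
  rw [hsucc] at hone ⊢
  exact hC.potential_sup_add_le_of_ncard_eq_one hℓ hCH hshare hone

theorem potential_add_mul_ncard_le (hH : IsConstructionSeq G ℓ t H) (hℓ : 3 ≤ ℓ) :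
    (H t).potential ℓ +
      (ℓ - 3) * {i | 1 ≤ i ∧ i < t ∧ ((H (i + 1)).verts \ (H i).verts).ncard = 1}.ncard ≤ ℓ := by
  classical
  rw [show {i | 1 ≤ i ∧ i < t ∧ ((H (i + 1)).verts \ (H i).verts).ncard = 1} =
    ↑{i ∈ Finset.Ico 1 t | ((H (i + 1)).verts \ (H i).verts).ncard = 1} by ext; simp [and_assoc],
    ncard_coe_finset]
  calc _ ≤ (H 1).potential ℓ := add_mul_card_filter_le (f := fun i ↦ (H i).potential ℓ) hH.1
        (fun _ ↦ hH.potential_succ_le hℓ) (fun _ ↦ hH.potential_succ_add_le hℓ)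
    _ = ℓ := hH.2.1.potential_eq hℓ

end IsConstructionSeq

/-- In a construction sequence of `ℓ`-cycles in a graph `G` with `m(G) < (ℓ-1)/(ℓ-2)`,
at most two steps add exactly one new vertex (configuration `(A_{ℓ-1})` appears at
most twice). -/
theorem configuration_A_ell_minus_one_at_most_twice {V : Type*} [Fintype V]
    (ℓ : ℕ) (hℓ : 5 ≤ ℓ) (G : SimpleGraph V)
    (hG : ∀ J : G.Subgraph, J.verts.Nonempty →
      (ℓ - 2) * J.edgeSet.ncard < (ℓ - 1) * J.verts.ncard)
    (t : ℕ) (H : ℕ → G.Subgraph) (hH : IsConstructionSeq G ℓ t H) :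
    {i : ℕ | 1 ≤ i ∧ i < t ∧ ((H (i + 1)).verts \ (H i).verts).ncard = 1}.ncard ≤ 2 := by
  have hnonempty : (H t).verts.Nonempty :=
    (nonempty_of_ncard_ne_zero (by rw [hH.2.1.ncard_verts_s12]; omega)).mono (hH.first_le hH.1 le_rfl).1
  have hend : 1 ≤ (H t).potential ℓ := Subgraph.one_le_potential (by omega) (hG _ hnonempty)
  have hcount := hH.potential_add_mul_ncard_le (by omega)
  by_contra! hthree
  have hk : (3 : ℤ) ≤ _ := Nat.cast_le.2 hthree
  have hℓ' : (5 : ℤ) ≤ ℓ := by exact_mod_cast hℓ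
  nlinarith
end

section
/- In every proper edge colouring of the complete bipartite graph K_{2,4} there is a rainbow copy of C₄; that is, K_{2,4} ⟶rb C₄. -/
lemma key4 (x y : Fin 4 → ℕ) (hx : Function.Injective x) (hy : Function.Injective y)
    (P : ∀ i j : Fin 4, i ≠ j → x i = y j ∨ x j = y i) (hA : x 0 = y 1) : False := by
  have h02 : x 2 = y 0 := by
    rcases P 0 2 (by decide) with h' | h'
    · exact absurd (hy (hA.symm.trans h')) (by decide)
    · exact h'
  rcases P 0 3 (by decide) with h' | h'
  · exact absurd (hy (hA.symm.trans h')) (by decide)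
  · exact absurd (hx (h'.trans h02.symm)) (by decide)

lemma aux4 (x y : Fin 4 → ℕ) (hx : Function.Injective x) (hy : Function.Injective y) :
    ∃ i j : Fin 4, i ≠ j ∧ x i ≠ y j ∧ x j ≠ y i := by
  by_contra h
  push_neg at h
  have P : ∀ i j : Fin 4, i ≠ j → x i = y j ∨ x j = y i := by
    intro i j hij
    by_cases hc : x i = y j
    · exact Or.inl hc
    · exact Or.inr (h i j hij hc)
  rcases P 0 1 (by decide) with hA | hA
  · exact key4 x y hx hy P hA
  · exact key4 y x hy hx (fun i j hij => (P j i hij.symm).imp Eq.symm Eq.symm) hA.symm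

lemma relHom_mk_apply {α β : Type*} {r : α → α → Prop} {s : β → β → Prop}
    (f : α → β) (h : ∀ {a b}, r a b → s (f a) (f b)) (a : α) :
    (⟨f, h⟩ : r →r s) a = f a := rfl

lemma edgeFinset_C4 :
    (SimpleGraph.cycleGraph 4).edgeFinset =
      {s((0 : Fin 4), 1), s(1, 2), s(2, 3), s(0, 3)} := by decide

/-- In every proper edge colouring of `K_{2,4}` there is a rainbow copy of `C₄`;
that is, `K_{2,4} ⟶rb C₄`. -/
theorem K24_arrows_rainbow_C4 :
    RainbowArrow (completeBipartiteGraph (Fin 2) (Fin 4))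
      (SimpleGraph.cycleGraph 4) := by
  intro c hc
  have adjLR : ∀ (a : Fin 2) (b : Fin 4),
      (completeBipartiteGraph (Fin 2) (Fin 4)).Adj (Sum.inl a) (Sum.inr b) := by
    intro a b; simp
  have hx : Function.Injective (fun i : Fin 4 => c s(Sum.inl 0, Sum.inr i)) := by
    intro a b hab
    by_contra hne
    exact hc (Sum.inl 0) (Sum.inr a) (Sum.inr b) (adjLR _ _) (adjLR _ _)
      (by simpa using hne) hab
  have hy : Function.Injective (fun i : Fin 4 => c s(Sum.inl 1, Sum.inr i)) := by
    intro a b hab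
    by_contra hne
    exact hc (Sum.inl 1) (Sum.inr a) (Sum.inr b) (adjLR _ _) (adjLR _ _)
      (by simpa using hne) hab
  have hswap : ∀ (a : Fin 2) (b : Fin 4),
      c s(Sum.inr b, Sum.inl a) = c s(Sum.inl a, Sum.inr b) := by
    intro a b; rw [Sym2.eq_swap]
  have hxy : ∀ i : Fin 4, c s(Sum.inl 0, Sum.inr i) ≠ c s(Sum.inl 1, Sum.inr i) := by
    intro i h
    refine hc (Sum.inr i) (Sum.inl 0) (Sum.inl 1) (adjLR _ _).symm (adjLR _ _).symm
      (by simp) ?_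
    rw [hswap, hswap]
    exact h
  obtain ⟨i, j, hij, h1, h2⟩ :=
    aux4 (fun i : Fin 4 => c s(Sum.inl 0, Sum.inr i))
      (fun i : Fin 4 => c s(Sum.inl 1, Sum.inr i)) hx hy
  have hxij : c s(Sum.inl 0, Sum.inr i) ≠ c s(Sum.inl 0, Sum.inr j) := hx.ne hij
  have hyij : c s(Sum.inl 1, Sum.inr i) ≠ c s(Sum.inl 1, Sum.inr j) := hy.ne hij
  refine ⟨⟨![Sum.inl 0, Sum.inr i, Sum.inl 1, Sum.inr j], ?_⟩, ?_, ?_⟩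
  · intro u v huv
    fin_cases u <;> fin_cases v <;>
      first
        | exact absurd huv (by decide)
        | simp
  · intro a b hab
    simp only [relHom_mk_apply] at hab
    fin_cases a <;> fin_cases b <;> simp_all
  · intro e₁ he₁ e₂ he₂ hne
    rw [← SimpleGraph.mem_edgeFinset, edgeFinset_C4] at he₁ he₂
    fin_cases he₁ <;> fin_cases he₂ <;>
      first
        | exact absurd rfl hne
        | (simp only [relHom_mk_apply, Sym2.map_pair_eq, Matrix.cons_val_zero,
            Matrix.cons_val_one, Matrix.head_cons, Matrix.cons_val_two, Matrix.tail_cons,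
            Matrix.cons_val_three, hswap]
           first
             | exact h1 | exact h1.symm | exact h2 | exact h2.symm
             | exact hxy i | exact (hxy i).symm | exact hxy j | exact (hxy j).symm
             | exact hxij | exact hxij.symm | exact hyij | exact hyij.symm)
end
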